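/- Let π be a probability distribution on a finite set S of the form π(s) = exp(Σ_{ℓ∈s} w̃(ℓ))/Z over subsets s ⊆ L (independent sets), where weights satisfy w(ℓ) − g* ≤ w̃(ℓ) ≤ w(ℓ) + g* for all ℓ, with g* ≥ 0. Let w* = max_{s∈S} Σ_{ℓ∈s} w(ℓ) and suppose the maximizer s* is in S. Then Z ≥ exp(w* − |L|·g*), and for any 0 < ε < 1, π({s ∈ S : Σ_{ℓ∈s} w(ℓ) < (1−ε)w*}) ≤ 2^{|L|}·exp(2|L|·g* − ε·w*). -/

import Mathlib

/-! A perturbation of each link weight by at most `g*` moves the weight of every schedule by at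
most `|L| g*`. Hence the partition function is at least the term of `s*`, i.e. `exp (w* - |L| g*)`,
while every schedule of `w`-weight below `(1 - ε) w*` has Gibbs weight at most
`exp ((1 - ε) w* + |L| g*)`; dividing and summing over at most `2^|L|` schedules gives the tail
bound. -/

open Finset

theorem Finset.abs_sum_sub_sum_le_card_mul {ι : Type*} (s : Finset ι) (f g : ι → ℝ) {c : ℝ}
    (hfg : ∀ i ∈ s, |f i - g i| ≤ c) :
    |∑ i ∈ s, f i - ∑ i ∈ s, g i| ≤ #s * c :=
  calc |∑ i ∈ s, f i - ∑ i ∈ s, g i| = |∑ i ∈ s, (f i - g i)| := by rw [sum_sub_distrib]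
    _ ≤ ∑ i ∈ s, |f i - g i| := abs_sum_le_sum_abs _ _
    _ ≤ #s * c := by simpa using sum_le_card_nsmul s _ c hfg

theorem abs_sum_sub_sum_le_card_univ_mul {L : Type*} [Fintype L] (s : Finset L)
    {w wt : L → ℝ} {g : ℝ} (hg : 0 ≤ g) (hw : ∀ ℓ, |wt ℓ - w ℓ| ≤ g) :
    |∑ ℓ ∈ s, wt ℓ - ∑ ℓ ∈ s, w ℓ| ≤ Fintype.card L * g :=
  (s.abs_sum_sub_sum_le_card_mul wt w fun ℓ _ => hw ℓ).trans <|
    mul_le_mul_of_nonneg_right (by exact_mod_cast card_le_univ s) hg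

section Gibbs

variable {α : Type*} (S : Finset α) (E : α → ℝ)

theorem exp_le_sum_exp_of_mem {s₀ : α} (hs₀ : s₀ ∈ S) {m : ℝ} (hm : m ≤ E s₀) :
    Real.exp m ≤ ∑ s ∈ S, Real.exp (E s) :=
  (Real.exp_le_exp.mpr hm).trans <|
    single_le_sum (f := fun s => Real.exp (E s)) (fun _ _ => (Real.exp_pos _).le) hs₀

theorem sum_filter_exp_div_sum_exp_le (p : α → Prop) [DecidablePred p] {m u : ℝ}
    (hZ : Real.exp m ≤ ∑ s ∈ S, Real.exp (E s)) (hu : ∀ s ∈ S, p s → E s ≤ u) :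
    ∑ s ∈ S.filter p, Real.exp (E s) / ∑ s' ∈ S, Real.exp (E s') ≤ #S * Real.exp (u - m) := by
  have hterm : ∀ s ∈ S.filter p,
      Real.exp (E s) / ∑ s' ∈ S, Real.exp (E s') ≤ Real.exp (u - m) := by
    intro s hs
    obtain ⟨hsS, hps⟩ := mem_filter.mp hs
    rw [Real.exp_sub]
    exact div_le_div₀ (Real.exp_pos _).le (Real.exp_le_exp.mpr (hu s hsS hps)) (Real.exp_pos _) hZ
  calc ∑ s ∈ S.filter p, Real.exp (E s) / ∑ s' ∈ S, Real.exp (E s')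
      ≤ #(S.filter p) * Real.exp (u - m) := by
        simpa using sum_le_card_nsmul _ _ _ hterm
    _ ≤ #S * Real.exp (u - m) := by
        gcongr
        exact filter_subset p S

end Gibbs

open Classical in
theorem stmt_11_general (L : Type*) [Fintype L]
    (S : Finset (Finset L))
    (w wt : L → ℝ) (gstar ε : ℝ) (hg : 0 ≤ gstar)
    (hw : ∀ ℓ, |wt ℓ - w ℓ| ≤ gstar)
    (sstar : Finset L) (hsstar : sstar ∈ S) :
    Real.exp ((∑ ℓ ∈ sstar, w ℓ) - (Fintype.card L : ℝ) * gstar)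
      ≤ (∑ s ∈ S, Real.exp (∑ ℓ ∈ s, wt ℓ)) ∧
    (∑ s ∈ S.filter fun s => ∑ ℓ ∈ s, w ℓ < (1 - ε) * ∑ ℓ ∈ sstar, w ℓ,
        Real.exp (∑ ℓ ∈ s, wt ℓ) / ∑ s' ∈ S, Real.exp (∑ ℓ ∈ s', wt ℓ))
      ≤ 2 ^ (Fintype.card L) *
          Real.exp (2 * (Fintype.card L : ℝ) * gstar - ε * ∑ ℓ ∈ sstar, w ℓ) := by
  have hdev s := abs_le.mp (abs_sum_sub_sum_le_card_univ_mul s hg hw)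
  have hZ := exp_le_sum_exp_of_mem S (fun s => ∑ ℓ ∈ s, wt ℓ) hsstar
    (m := ∑ ℓ ∈ sstar, w ℓ - Fintype.card L * gstar) (by linarith [(hdev sstar).1])
  refine ⟨hZ, ?_⟩
  have hcard : (#S : ℝ) ≤ 2 ^ Fintype.card L := by
    exact_mod_cast (card_le_univ S).trans_eq Fintype.card_finset
  calc _ ≤ #S * Real.exp ((1 - ε) * ∑ ℓ ∈ sstar, w ℓ + Fintype.card L * gstar
          - (∑ ℓ ∈ sstar, w ℓ - Fintype.card L * gstar)) :=
        sum_filter_exp_div_sum_exp_le S _ _ hZ fun s _ hs => by linarith [(hdev s).2]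
    _ ≤ _ := by
        rw [show ∀ a n : ℝ, (1 - ε) * a + n * gstar - (a - n * gstar) = 2 * n * gstar - ε * a by
          intros; ring]
        exact mul_le_mul_of_nonneg_right hcard (Real.exp_pos _).le

open Classical in
theorem stmt_11 (L : Type*) [Fintype L]
    (S : Finset (Finset L)) (hS : S.Nonempty)
    (w wt : L → ℝ) (gstar ε : ℝ) (hg : 0 ≤ gstar)
    (hw : ∀ ℓ, |wt ℓ - w ℓ| ≤ gstar)
    (sstar : Finset L) (hsstar : sstar ∈ S)
    (hmax : ∀ s ∈ S, ∑ ℓ ∈ s, w ℓ ≤ ∑ ℓ ∈ sstar, w ℓ)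
    (hε0 : 0 < ε) (hε1 : ε < 1) :
    Real.exp ((∑ ℓ ∈ sstar, w ℓ) - (Fintype.card L : ℝ) * gstar)
      ≤ (∑ s ∈ S, Real.exp (∑ ℓ ∈ s, wt ℓ)) ∧
    (∑ s ∈ S.filter fun s => ∑ ℓ ∈ s, w ℓ < (1 - ε) * ∑ ℓ ∈ sstar, w ℓ,
        Real.exp (∑ ℓ ∈ s, wt ℓ) / ∑ s' ∈ S, Real.exp (∑ ℓ ∈ s', wt ℓ))
      ≤ 2 ^ (Fintype.card L) *
          Real.exp (2 * (Fintype.card L : ℝ) * gstar - ε * ∑ ℓ ∈ sstar, w ℓ) :=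
  stmt_11_general L S w wt gstar ε hg hw sstar hsstar
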